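/- Let (M, η) be a (2n+1)-dimensional contact manifold, Ω = η ∧ (dη)^n its contact volume form, and X_H the Hamiltonian vector field of H. Then L_{X_H} Ω = −(n+1) R(H) Ω. If H is nowhere vanishing, the modified volume Ω̃ = H^{-(n+1)} Ω satisfies L_{X_H} Ω̃ = 0. -/

import Mathlib

open Module Function
set_option maxHeartbeats 1000000

variable {E : Type*} [NormedAddCommGroup E] [NormedSpace ℝ E]

/-- The exterior derivative of a 1-form `η` on the vector space `E` (chart model of a manifold):
`dη_x(v,w) = Dη(x)(v)(w) - Dη(x)(w)(v)`. -/
noncomputable def dEta (η : E → E →L[ℝ] ℝ) (x : E) (v w : E) : ℝ :=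
  fderiv ℝ η x v w - fderiv ℝ η x w v

/-- The full antisymmetrization of `η ⊗ (dη)^{⊗ n}` at `x`, evaluated on the vectors `v`.
This is a nonzero constant multiple of the (2n+1)-form `η ∧ (dη)^n`, so it is nonvanishing
iff `η ∧ (dη)^n` is. -/
noncomputable def contactVol (η : E → E →L[ℝ] ℝ) (n : ℕ) (x : E)
    (v : Fin (2 * n + 1) → E) : ℝ :=
  ∑ σ : Equiv.Perm (Fin (2 * n + 1)),
    ((Equiv.Perm.sign σ : ℤ) : ℝ) *
      (η x (v (σ 0)) *
        ∏ i : Fin n,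
          dEta η x (v (σ ⟨2 * i.val + 1, by have := i.isLt; omega⟩))
            (v (σ ⟨2 * i.val + 2, by have := i.isLt; omega⟩)))

/-- `(M = E, η)` is a contact manifold of dimension `2n+1`: `η` is a smooth 1-form and
`η ∧ (dη)^n` is a volume form (nowhere vanishing top form). -/
def IsContactForm (n : ℕ) (η : E → E →L[ℝ] ℝ) : Prop :=
  ContDiff ℝ (⊤ : ℕ∞) η ∧ finrank ℝ E = 2 * n + 1 ∧
    ∀ x : E, ∃ v : Fin (2 * n + 1) → E, contactVol η n x v ≠ 0


namespace CVol

variable {n : ℕ}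

def oI (n : ℕ) (i : Fin n) : Fin (2 * n + 1) := ⟨2 * i.1 + 1, by have := i.isLt; omega⟩
def eI (n : ℕ) (i : Fin n) : Fin (2 * n + 1) := ⟨2 * i.1 + 2, by have := i.isLt; omega⟩

lemma oI_ne_zero (i : Fin n) : oI n i ≠ 0 := by
  simp [oI, Fin.ext_iff]
lemma eI_ne_zero (i : Fin n) : eI n i ≠ 0 := by
  simp [eI, Fin.ext_iff]
lemma oI_ne_eI (i j : Fin n) : oI n i ≠ eI n j := by
  simp only [oI, eI, ne_eq, Fin.mk.injEq]; omega
lemma oI_inj {i j : Fin n} (h : oI n i = oI n j) : i = j := by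
  simp only [oI, Fin.mk.injEq, Fin.ext_iff] at h ⊢; omega
lemma eI_inj {i j : Fin n} (h : eI n i = eI n j) : i = j := by
  simp only [eI, Fin.mk.injEq, Fin.ext_iff] at h ⊢; omega

/-- partition of the index sum -/
lemma sum_partition (g : Fin (2 * n + 1) → ℝ) :
    ∑ p, g p = g 0 + ∑ j : Fin n, (g (oI n j) + g (eI n j)) := by
  classical
  set f : ℕ → ℝ := fun m => if h : m < 2 * n + 1 then g ⟨m, h⟩ else 0 with hf
  have h1 : ∑ p, g p = ∑ m ∈ Finset.range (2 * n + 1), f m := by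
    rw [Finset.sum_range fun m => f m]
    apply Finset.sum_congr rfl
    intro p _
    simp [hf, p.isLt]
    intro h; have := p.isLt; omega
  have h2 : ∀ N : ℕ, (hN : 2 * N + 1 ≤ 2 * n + 1) →
      ∑ m ∈ Finset.range (2 * N + 1), f m
        = f 0 + ∑ j ∈ Finset.range N, (f (2 * j + 1) + f (2 * j + 2)) := by
    intro N
    induction N with
    | zero => intro _; simp
    | succ k ih =>
        intro hN
        have e1 : 2 * (k + 1) + 1 = (2 * k + 1) + 1 + 1 := by ring
        rw [e1, Finset.sum_range_succ, Finset.sum_range_succ, ih (by omega),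
          Finset.sum_range_succ]
        ring
  have h3 := h2 n le_rfl
  rw [h1, h3]
  congr 1
  · rw [Finset.sum_range fun j => f (2 * j + 1) + f (2 * j + 2)]
    apply Finset.sum_congr rfl
    intro j _
    have hj := j.isLt
    simp only [hf]
    rw [dif_pos (by omega), dif_pos (by omega)]
    simp [oI, eI]

/-- the alternating-sum vanishing trick -/
lemma sum_perm_eq_zero {m : ℕ} (g : (Fin m → E) → ℝ) (τ : Equiv.Perm (Fin m))
    (hτ : Equiv.Perm.sign τ = -1) (hg : ∀ w : Fin m → E, g (w ∘ τ) = g w)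
    (v : Fin m → E) :
    ∑ σ : Equiv.Perm (Fin m), ((Equiv.Perm.sign σ : ℤ) : ℝ) * g (v ∘ σ) = 0 := by
  have key : (∑ σ : Equiv.Perm (Fin m), ((Equiv.Perm.sign σ : ℤ) : ℝ) * g (v ∘ σ))
      = ∑ σ : Equiv.Perm (Fin m), ((Equiv.Perm.sign (σ * τ) : ℤ) : ℝ) * g (v ∘ ⇑(σ * τ)) := by
    exact (Fintype.sum_equiv (Equiv.mulRight τ) _ _ fun σ => rfl).symm
  have term : ∀ σ : Equiv.Perm (Fin m),
      ((Equiv.Perm.sign (σ * τ) : ℤ) : ℝ) * g (v ∘ ⇑(σ * τ))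
        = -(((Equiv.Perm.sign σ : ℤ) : ℝ) * g (v ∘ σ)) := by
    intro σ
    have h1 : Equiv.Perm.sign (σ * τ) = -Equiv.Perm.sign σ := by
      rw [map_mul, hτ, mul_neg_one]
    have h2 : v ∘ ⇑(σ * τ) = (v ∘ ⇑σ) ∘ ⇑τ := by
      ext p; simp [Equiv.Perm.mul_apply]
    rw [h1, h2, hg]
    push_cast
    ring
  have := key
  simp only [term] at this
  rw [Finset.sum_neg_distrib] at this
  linarith

def P (α : E → ℝ) (β : E → E → ℝ) (w : Fin (2 * n + 1) → E) : ℝ :=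
  α (w 0) * ∏ i : Fin n, β (w (oI n i)) (w (eI n i))

lemma P_update_zero (α : E → ℝ) (β : E → E → ℝ) (w : Fin (2 * n + 1) → E) (u : E) :
    P α β (update w 0 u) = α u * ∏ i : Fin n, β (w (oI n i)) (w (eI n i)) := by
  have hprod : ∏ i : Fin n, β (update w 0 u (oI n i)) (update w 0 u (eI n i))
      = ∏ i : Fin n, β (w (oI n i)) (w (eI n i)) :=
    Finset.prod_congr rfl fun i _ => by
      rw [update_of_ne (oI_ne_zero i), update_of_ne (eI_ne_zero i)]
  unfold P
  rw [update_self, hprod]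

lemma P_update_o (α : E → ℝ) (β : E → E → ℝ) (w : Fin (2 * n + 1) → E) (j : Fin n) (u : E) :
    P α β (update w (oI n j) u)
      = α (w 0) * (β u (w (eI n j)) *
          ∏ i ∈ Finset.univ.erase j, β (w (oI n i)) (w (eI n i))) := by
  have hj : β (update w (oI n j) u (oI n j)) (update w (oI n j) u (eI n j))
      = β u (w (eI n j)) := by
    rw [update_self, update_of_ne (Ne.symm (oI_ne_eI j j))]
  have hrest : ∏ i ∈ Finset.univ.erase j,
        β (update w (oI n j) u (oI n i)) (update w (oI n j) u (eI n i))
      = ∏ i ∈ Finset.univ.erase j, β (w (oI n i)) (w (eI n i)) :=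
    Finset.prod_congr rfl fun i hi => by
      rw [update_of_ne (fun h => (Finset.mem_erase.1 hi).1 (oI_inj h)),
        update_of_ne (Ne.symm (oI_ne_eI j i))]
  unfold P
  rw [update_of_ne (Ne.symm (oI_ne_zero j)),
    ← Finset.mul_prod_erase Finset.univ _ (Finset.mem_univ j), hj, hrest]

lemma P_update_e (α : E → ℝ) (β : E → E → ℝ) (w : Fin (2 * n + 1) → E) (j : Fin n) (u : E) :
    P α β (update w (eI n j) u)
      = α (w 0) * (β (w (oI n j)) u *
          ∏ i ∈ Finset.univ.erase j, β (w (oI n i)) (w (eI n i))) := by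
  have hj : β (update w (eI n j) u (oI n j)) (update w (eI n j) u (eI n j))
      = β (w (oI n j)) u := by
    rw [update_self, update_of_ne (oI_ne_eI j j)]
  have hrest : ∏ i ∈ Finset.univ.erase j,
        β (update w (eI n j) u (oI n i)) (update w (eI n j) u (eI n i))
      = ∏ i ∈ Finset.univ.erase j, β (w (oI n i)) (w (eI n i)) :=
    Finset.prod_congr rfl fun i hi => by
      rw [update_of_ne (oI_ne_eI i j),
        update_of_ne (fun h => (Finset.mem_erase.1 hi).1 (eI_inj h))]
  unfold P
  rw [update_of_ne (Ne.symm (eI_ne_zero j)),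
    ← Finset.mul_prod_erase Finset.univ _ (Finset.mem_univ j), hj, hrest]

lemma pointwise (α αd fd : E → ℝ) (β βd : E → E → ℝ) (L : E → E) (f : ℝ)
    (h1 : ∀ u, αd u + α (L u) = -f * α u)
    (h2 : ∀ u w, βd u w + β (L u) w + β u (L w)
        = -f * β u w - (fd u * α w - fd w * α u))
    (w : Fin (2 * n + 1) → E) :
    (α (w 0) * ∑ j : Fin n, βd (w (oI n j)) (w (eI n j)) *
        ∏ i ∈ Finset.univ.erase j, β (w (oI n i)) (w (eI n i))
      + (∏ i : Fin n, β (w (oI n i)) (w (eI n i))) * αd (w 0))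
    + ∑ p, P α β (update w p (L (w p)))
    = -((n : ℝ) + 1) * f * P α β w
      - α (w 0) * ∑ j : Fin n, fd (w (oI n j)) * α (w (eI n j)) *
          ∏ i ∈ Finset.univ.erase j, β (w (oI n i)) (w (eI n i))
      + α (w 0) * ∑ j : Fin n, fd (w (eI n j)) * α (w (oI n j)) *
          ∏ i ∈ Finset.univ.erase j, β (w (oI n i)) (w (eI n i)) := by
  classical
  have e0 : αd (w 0) + α (L (w 0)) = -f * α (w 0) := h1 _
  have HQ : ∑ j : Fin n, β (w (oI n j)) (w (eI n j)) *
        ∏ i ∈ Finset.univ.erase j, β (w (oI n i)) (w (eI n i))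
      = (n : ℝ) * ∏ i : Fin n, β (w (oI n i)) (w (eI n i)) := by
    rw [Finset.sum_congr rfl fun j _ =>
        Finset.mul_prod_erase Finset.univ (fun i => β (w (oI n i)) (w (eI n i)))
          (Finset.mem_univ j),
      Finset.sum_const, Finset.card_univ, Fintype.card_fin, nsmul_eq_mul]
  have E1 : ∑ j : Fin n, ((βd (w (oI n j)) (w (eI n j)) + β (L (w (oI n j))) (w (eI n j))
        + β (w (oI n j)) (L (w (eI n j)))) *
          ∏ i ∈ Finset.univ.erase j, β (w (oI n i)) (w (eI n i)))
      = (∑ j : Fin n, βd (w (oI n j)) (w (eI n j)) *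
          ∏ i ∈ Finset.univ.erase j, β (w (oI n i)) (w (eI n i)))
        + (∑ j : Fin n, β (L (w (oI n j))) (w (eI n j)) *
          ∏ i ∈ Finset.univ.erase j, β (w (oI n i)) (w (eI n i)))
        + (∑ j : Fin n, β (w (oI n j)) (L (w (eI n j))) *
          ∏ i ∈ Finset.univ.erase j, β (w (oI n i)) (w (eI n i))) := by
    rw [← Finset.sum_add_distrib, ← Finset.sum_add_distrib]
    exact Finset.sum_congr rfl fun j _ => by ring
  have E2 : ∑ j : Fin n, ((βd (w (oI n j)) (w (eI n j)) + β (L (w (oI n j))) (w (eI n j))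
        + β (w (oI n j)) (L (w (eI n j)))) *
          ∏ i ∈ Finset.univ.erase j, β (w (oI n i)) (w (eI n i)))
      = -f * ((n : ℝ) * ∏ i : Fin n, β (w (oI n i)) (w (eI n i)))
        - (∑ j : Fin n, fd (w (oI n j)) * α (w (eI n j)) *
          ∏ i ∈ Finset.univ.erase j, β (w (oI n i)) (w (eI n i)))
        + ∑ j : Fin n, fd (w (eI n j)) * α (w (oI n j)) *
          ∏ i ∈ Finset.univ.erase j, β (w (oI n i)) (w (eI n i)) := by
    rw [Finset.sum_congr rfl fun j _ => by rw [h2 (w (oI n j)) (w (eI n j))]]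
    rw [Finset.sum_congr rfl fun j (_ : j ∈ (Finset.univ : Finset (Fin n))) =>
      show (-f * β (w (oI n j)) (w (eI n j))
          - (fd (w (oI n j)) * α (w (eI n j)) - fd (w (eI n j)) * α (w (oI n j)))) *
            ∏ i ∈ Finset.univ.erase j, β (w (oI n i)) (w (eI n i))
        = (-f * (β (w (oI n j)) (w (eI n j)) *
              ∏ i ∈ Finset.univ.erase j, β (w (oI n i)) (w (eI n i)))
            - fd (w (oI n j)) * α (w (eI n j)) *
              ∏ i ∈ Finset.univ.erase j, β (w (oI n i)) (w (eI n i)))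
          + fd (w (eI n j)) * α (w (oI n j)) *
              ∏ i ∈ Finset.univ.erase j, β (w (oI n i)) (w (eI n i)) from by ring]
    rw [Finset.sum_add_distrib, Finset.sum_sub_distrib, ← Finset.mul_sum, HQ]
  have hB : ∑ p, P α β (update w p (L (w p)))
      = α (L (w 0)) * ∏ i : Fin n, β (w (oI n i)) (w (eI n i))
        + (α (w 0) * ∑ j : Fin n, β (L (w (oI n j))) (w (eI n j)) *
            ∏ i ∈ Finset.univ.erase j, β (w (oI n i)) (w (eI n i))
          + α (w 0) * ∑ j : Fin n, β (w (oI n j)) (L (w (eI n j))) *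
            ∏ i ∈ Finset.univ.erase j, β (w (oI n i)) (w (eI n i))) := by
    rw [sum_partition (g := fun p => P α β (update w p (L (w p)))), P_update_zero]
    rw [Finset.sum_congr rfl fun j (_ : j ∈ (Finset.univ : Finset (Fin n))) => by
      rw [P_update_o α β w j (L (w (oI n j))), P_update_e α β w j (L (w (eI n j)))]]
    rw [Finset.sum_add_distrib, Finset.mul_sum, Finset.mul_sum]
  have hP : P α β w = α (w 0) * ∏ i : Fin n, β (w (oI n i)) (w (eI n i)) := rfl
  rw [hB]
  linear_combination α (w 0) * E2 - α (w 0) * E1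
    + (∏ i : Fin n, β (w (oI n i)) (w (eI n i))) * e0 + ((n : ℝ) + 1) * f * hP

lemma alg (α αd fd : E → ℝ) (β βd : E → E → ℝ) (L : E → E) (f : ℝ)
    (h1 : ∀ u, αd u + α (L u) = -f * α u)
    (h2 : ∀ u w, βd u w + β (L u) w + β u (L w)
        = -f * β u w - (fd u * α w - fd w * α u))
    (v : Fin (2 * n + 1) → E) :
    (∑ σ : Equiv.Perm (Fin (2 * n + 1)), ((Equiv.Perm.sign σ : ℤ) : ℝ) *
        (α ((v ∘ ⇑σ) 0) * ∑ j : Fin n, βd ((v ∘ ⇑σ) (oI n j)) ((v ∘ ⇑σ) (eI n j)) * ∏ i ∈ Finset.univ.erase j, β ((v ∘ ⇑σ) (oI n i)) ((v ∘ ⇑σ) (eI n i))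
        + (∏ i : Fin n, β ((v ∘ ⇑σ) (oI n i)) ((v ∘ ⇑σ) (eI n i))) * αd ((v ∘ ⇑σ) 0)))
      + ∑ σ : Equiv.Perm (Fin (2 * n + 1)), ((Equiv.Perm.sign σ : ℤ) : ℝ) * (∑ p, P α β (update (v ∘ ⇑σ) p (L ((v ∘ ⇑σ) p))))
      = -((n : ℝ) + 1) * f *
          ∑ σ : Equiv.Perm (Fin (2 * n + 1)), ((Equiv.Perm.sign σ : ℤ) : ℝ) * P α β (v ∘ ⇑σ) := by
  classical
  have step : ∀ σ : Equiv.Perm (Fin (2 * n + 1)),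
      ((Equiv.Perm.sign σ : ℤ) : ℝ) * (α ((v ∘ ⇑σ) 0) * ∑ j : Fin n, βd ((v ∘ ⇑σ) (oI n j)) ((v ∘ ⇑σ) (eI n j)) * ∏ i ∈ Finset.univ.erase j, β ((v ∘ ⇑σ) (oI n i)) ((v ∘ ⇑σ) (eI n i))
        + (∏ i : Fin n, β ((v ∘ ⇑σ) (oI n i)) ((v ∘ ⇑σ) (eI n i))) * αd ((v ∘ ⇑σ) 0)) + ((Equiv.Perm.sign σ : ℤ) : ℝ) * (∑ p, P α β (update (v ∘ ⇑σ) p (L ((v ∘ ⇑σ) p))))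
        = ((Equiv.Perm.sign σ : ℤ) : ℝ) * (-((n : ℝ) + 1) * f * P α β (v ∘ ⇑σ)) + (-(((Equiv.Perm.sign σ : ℤ) : ℝ) * (α ((v ∘ ⇑σ) 0) * ∑ j : Fin n, fd ((v ∘ ⇑σ) (oI n j)) * α ((v ∘ ⇑σ) (eI n j)) * ∏ i ∈ Finset.univ.erase j, β ((v ∘ ⇑σ) (oI n i)) ((v ∘ ⇑σ) (eI n i)))) + ((Equiv.Perm.sign σ : ℤ) : ℝ) * (α ((v ∘ ⇑σ) 0) * ∑ j : Fin n, fd ((v ∘ ⇑σ) (eI n j)) * α ((v ∘ ⇑σ) (oI n j)) * ∏ i ∈ Finset.univ.erase j, β ((v ∘ ⇑σ) (oI n i)) ((v ∘ ⇑σ) (eI n i)))) := by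
    intro σ
    have hp := pointwise α αd fd β βd L f h1 h2 (v ∘ ⇑σ)
    linear_combination ((Equiv.Perm.sign σ : ℤ) : ℝ) * hp
  have hz1 : (∑ σ : Equiv.Perm (Fin (2 * n + 1)), ((Equiv.Perm.sign σ : ℤ) : ℝ) * (α ((v ∘ ⇑σ) 0) * ∑ j : Fin n, fd ((v ∘ ⇑σ) (oI n j)) * α ((v ∘ ⇑σ) (eI n j)) * ∏ i ∈ Finset.univ.erase j, β ((v ∘ ⇑σ) (oI n i)) ((v ∘ ⇑σ) (eI n i)))) = 0 := by
    have swap1 : ∀ σ : Equiv.Perm (Fin (2 * n + 1)), ((Equiv.Perm.sign σ : ℤ) : ℝ) * (α ((v ∘ ⇑σ) 0) * ∑ j : Fin n, fd ((v ∘ ⇑σ) (oI n j)) * α ((v ∘ ⇑σ) (eI n j)) * ∏ i ∈ Finset.univ.erase j, β ((v ∘ ⇑σ) (oI n i)) ((v ∘ ⇑σ) (eI n i)))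
        = ∑ j : Fin n, ((Equiv.Perm.sign σ : ℤ) : ℝ) * (α ((v ∘ ⇑σ) 0) * (fd ((v ∘ ⇑σ) (oI n j)) * α ((v ∘ ⇑σ) (eI n j)) * ∏ i ∈ Finset.univ.erase j, β ((v ∘ ⇑σ) (oI n i)) ((v ∘ ⇑σ) (eI n i)))) := by
      intro σ
      rw [Finset.mul_sum, Finset.mul_sum]
    rw [Finset.sum_congr rfl fun σ _ => swap1 σ, Finset.sum_comm]
    apply Finset.sum_eq_zero
    intro j _
    apply sum_perm_eq_zero (g := fun w => α (w 0) * (fd (w (oI n j)) * α (w (eI n j)) *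
        ∏ i ∈ Finset.univ.erase j, β (w (oI n i)) (w (eI n i)))) (τ := Equiv.swap 0 (eI n j))
      (Equiv.Perm.sign_swap (Ne.symm (eI_ne_zero j)))
    intro w
    simp only [Function.comp_apply]
    rw [Equiv.swap_apply_left,
      Equiv.swap_apply_of_ne_of_ne (oI_ne_zero j) (oI_ne_eI j j),
      Equiv.swap_apply_right,
      Finset.prod_congr rfl fun i hi => by
        rw [Equiv.swap_apply_of_ne_of_ne (oI_ne_zero i) (oI_ne_eI i j),
          Equiv.swap_apply_of_ne_of_ne (eI_ne_zero i)
            (fun h => (Finset.mem_erase.1 hi).1 (eI_inj h))]]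
    ring
  have hz2 : (∑ σ : Equiv.Perm (Fin (2 * n + 1)), ((Equiv.Perm.sign σ : ℤ) : ℝ) * (α ((v ∘ ⇑σ) 0) * ∑ j : Fin n, fd ((v ∘ ⇑σ) (eI n j)) * α ((v ∘ ⇑σ) (oI n j)) * ∏ i ∈ Finset.univ.erase j, β ((v ∘ ⇑σ) (oI n i)) ((v ∘ ⇑σ) (eI n i)))) = 0 := by
    have swap2 : ∀ σ : Equiv.Perm (Fin (2 * n + 1)), ((Equiv.Perm.sign σ : ℤ) : ℝ) * (α ((v ∘ ⇑σ) 0) * ∑ j : Fin n, fd ((v ∘ ⇑σ) (eI n j)) * α ((v ∘ ⇑σ) (oI n j)) * ∏ i ∈ Finset.univ.erase j, β ((v ∘ ⇑σ) (oI n i)) ((v ∘ ⇑σ) (eI n i)))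
        = ∑ j : Fin n, ((Equiv.Perm.sign σ : ℤ) : ℝ) * (α ((v ∘ ⇑σ) 0) * (fd ((v ∘ ⇑σ) (eI n j)) * α ((v ∘ ⇑σ) (oI n j)) * ∏ i ∈ Finset.univ.erase j, β ((v ∘ ⇑σ) (oI n i)) ((v ∘ ⇑σ) (eI n i)))) := by
      intro σ
      rw [Finset.mul_sum, Finset.mul_sum]
    rw [Finset.sum_congr rfl fun σ _ => swap2 σ, Finset.sum_comm]
    apply Finset.sum_eq_zero
    intro j _
    apply sum_perm_eq_zero (g := fun w => α (w 0) * (fd (w (eI n j)) * α (w (oI n j)) *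
        ∏ i ∈ Finset.univ.erase j, β (w (oI n i)) (w (eI n i)))) (τ := Equiv.swap 0 (oI n j))
      (Equiv.Perm.sign_swap (Ne.symm (oI_ne_zero j)))
    intro w
    simp only [Function.comp_apply]
    rw [Equiv.swap_apply_left,
      Equiv.swap_apply_of_ne_of_ne (eI_ne_zero j) (Ne.symm (oI_ne_eI j j)),
      Equiv.swap_apply_right,
      Finset.prod_congr rfl fun i hi => by
        rw [Equiv.swap_apply_of_ne_of_ne (oI_ne_zero i)
            (fun h => (Finset.mem_erase.1 hi).1 (oI_inj h)),
          Equiv.swap_apply_of_ne_of_ne (eI_ne_zero i) (Ne.symm (oI_ne_eI j i))]]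
    ring
  have hmain : ∑ σ : Equiv.Perm (Fin (2 * n + 1)), ((Equiv.Perm.sign σ : ℤ) : ℝ) * (-((n : ℝ) + 1) * f * P α β (v ∘ ⇑σ))
      = -((n : ℝ) + 1) * f * ∑ σ : Equiv.Perm (Fin (2 * n + 1)), ((Equiv.Perm.sign σ : ℤ) : ℝ) * P α β (v ∘ ⇑σ) := by
    rw [Finset.mul_sum]
    exact Finset.sum_congr rfl fun σ _ => by ring
  rw [← Finset.sum_add_distrib, Finset.sum_congr rfl fun σ _ => step σ,
    Finset.sum_add_distrib, Finset.sum_add_distrib, Finset.sum_neg_distrib,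
    hz1, hz2, hmain]
  ring

end CVol

open CVol in
/-- for the contact volume form `Ω = η ∧ (dη)^n` (represented by `contactVol`)
and the Hamiltonian vector field `X_H`, the Lie derivative (computed for a tensor field in
flat coordinates by `(L_X Ω)(v) = X(Ω(v)) + ∑ᵢ Ω(v₁,…,DX(vᵢ),…,v_{2n+1})`) satisfies
`L_{X_H} Ω = -(n+1) R(H) Ω`; and if `H` is nowhere vanishing then the modified volume
`Ω̃ = H^{-(n+1)} Ω` satisfies `L_{X_H} Ω̃ = 0`. -/
theorem contact_volume_dissipation [FiniteDimensional ℝ E] (n : ℕ)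
    (η : E → E →L[ℝ] ℝ) (hη : IsContactForm n η)
    (R : E → E) (hR : ∀ x : E, (∀ w : E, dEta η x (R x) w = 0) ∧ η x (R x) = 1)
    (H : E → ℝ) (hH : ContDiff ℝ (⊤ : ℕ∞) H) (X : E → E) (hXs : ContDiff ℝ (⊤ : ℕ∞) X)
    (hX : ∀ x w : E, dEta η x (X x) w + η x (X x) * η x w
      = fderiv ℝ H x w - (fderiv ℝ H x (R x) + H x) * η x w) :
    (∀ (x : E) (v : Fin (2 * n + 1) → E),
        fderiv ℝ (fun y => contactVol η n y v) x (X x)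
          + ∑ i : Fin (2 * n + 1),
              contactVol η n x (Function.update v i (fderiv ℝ X x (v i)))
        = -((n : ℝ) + 1) * fderiv ℝ H x (R x) * contactVol η n x v) ∧
      ((∀ x, H x ≠ 0) →
        ∀ (x : E) (v : Fin (2 * n + 1) → E),
          fderiv ℝ (fun y => (H y ^ (n + 1))⁻¹ * contactVol η n y v) x (X x)
            + ∑ i : Fin (2 * n + 1),
                (H x ^ (n + 1))⁻¹ * contactVol η n x (Function.update v i (fderiv ℝ X x (v i)))
          = 0) := by
  obtain ⟨hηs, hdim, hvol⟩ := hη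
  have hηd : ∀ y, HasFDerivAt η (fderiv ℝ η y) y := fun y =>
    ((hηs.differentiable (by simp)) y).hasFDerivAt
  have hη's : ContDiff ℝ (⊤ : ℕ∞) (fderiv ℝ η) := hηs.fderiv_right (by simp)
  have hη'd : ∀ y, HasFDerivAt (fderiv ℝ η) (fderiv ℝ (fderiv ℝ η) y) y := fun y =>
    ((hη's.differentiable (by simp)) y).hasFDerivAt
  have hHd : ∀ y, HasFDerivAt H (fderiv ℝ H y) y := fun y =>
    ((hH.differentiable (by simp)) y).hasFDerivAt
  have hH's : ContDiff ℝ (⊤ : ℕ∞) (fderiv ℝ H) := hH.fderiv_right (by simp)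
  have hH'd : ∀ y, HasFDerivAt (fderiv ℝ H) (fderiv ℝ (fderiv ℝ H) y) y := fun y =>
    ((hH's.differentiable (by simp)) y).hasFDerivAt
  have hXd : ∀ y, HasFDerivAt X (fderiv ℝ X y) y := fun y =>
    ((hXs.differentiable (by simp)) y).hasFDerivAt
  have ηX : ∀ y, η y (X y) = -H y := by
    intro y
    have h := hX y (R y)
    have h0 : dEta η y (X y) (R y) = 0 := by
      have h' := (hR y).1 (X y)
      simp only [dEta] at h' ⊢
      linarith
    rw [h0, (hR y).2] at h
    simp only [mul_one, zero_add] at h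
    linarith
  have B : ∀ y u, dEta η y (X y) u = fderiv ℝ H y u - fderiv ℝ H y (R y) * η y u := by
    intro y u
    have h := hX y u
    rw [ηX y] at h
    linear_combination h
  -- clean derivative helpers
  have hηappHas : ∀ (x u : E), HasFDerivAt (fun y => η y u) ((fderiv ℝ η x).flip u) x := by
    intro x u
    have h := (hηd x).clm_apply (hasFDerivAt_const u x)
    simp only [ContinuousLinearMap.comp_zero, zero_add] at h
    exact h
  have hdEtaHas : ∀ (x u w : E), HasFDerivAt (fun y => dEta η y u w)
      (((fderiv ℝ (fderiv ℝ η) x).flip u).flip w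
        - ((fderiv ℝ (fderiv ℝ η) x).flip w).flip u) x := by
    intro x u w
    have h1 := ((hη'd x).clm_apply (hasFDerivAt_const u x)).clm_apply (hasFDerivAt_const w x)
    have h2 := ((hη'd x).clm_apply (hasFDerivAt_const w x)).clm_apply (hasFDerivAt_const u x)
    have h := h1.sub h2
    simp only [ContinuousLinearMap.comp_zero, zero_add] at h
    exact h
  have part1 : ∀ (x : E) (v : Fin (2 * n + 1) → E),
      fderiv ℝ (fun y => contactVol η n y v) x (X x)
        + ∑ i : Fin (2 * n + 1),
            contactVol η n x (Function.update v i (fderiv ℝ X x (v i)))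
      = -((n : ℝ) + 1) * fderiv ℝ H x (R x) * contactVol η n x v := by
    intro x v
    -- identity A
    have hA : ∀ u : E, fderiv ℝ η x u (X x) + η x (fderiv ℝ X x u) = -fderiv ℝ H x u := by
      intro u
      have d1 := (hηd x).clm_apply (hXd x)
      have d2 := (hHd x).neg
      rw [show (fun y => η y (X y)) = fun y => -H y from funext ηX] at d1
      have happ := congrArg (fun T : E →L[ℝ] ℝ => T u) (d1.unique d2)
      simp only [ContinuousLinearMap.add_apply, ContinuousLinearMap.coe_comp',
        Function.comp_apply, ContinuousLinearMap.flip_apply, ContinuousLinearMap.neg_apply] at happ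
      linear_combination happ
    -- differentiability of the Reeb derivative of H
    have hFd : HasFDerivAt (fun y => fderiv ℝ H y (R y))
        (fderiv ℝ (fun y => fderiv ℝ H y (R y)) x) x := by
      have hcont : ContinuousAt (fun y => η y (R x)) x :=
        (hηappHas x (R x)).differentiableAt.continuousAt
      have hne0 : ∀ᶠ y in nhds x, η y (R x) ≠ 0 :=
        hcont.eventually_ne (by rw [(hR x).2]; exact one_ne_zero)
      have hg : DifferentiableAt ℝ
          (fun y => (fderiv ℝ H y (R x) - dEta η y (X y) (R x)) * (η y (R x))⁻¹) x := by
        have d1 : DifferentiableAt ℝ (fun y => fderiv ℝ H y (R x) - dEta η y (X y) (R x)) x :=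
          DifferentiableAt.sub
            ((hH'd x).clm_apply (hasFDerivAt_const (R x) x)).differentiableAt
            ((((hη'd x).clm_apply (hXd x)).clm_apply
                (hasFDerivAt_const (R x) x)).sub
              (((hη'd x).clm_apply (hasFDerivAt_const (R x) x)).clm_apply (hXd x))).differentiableAt
        have d2 : DifferentiableAt ℝ (fun y => η y (R x)) x := (hηappHas x (R x)).differentiableAt
        have d3 : η x (R x) ≠ 0 := by rw [(hR x).2]; exact one_ne_zero
        exact d1.mul (d2.inv d3)
      have heq : (fun y => fderiv ℝ H y (R y))
          =ᶠ[nhds x] (fun y => (fderiv ℝ H y (R x) - dEta η y (X y) (R x)) * (η y (R x))⁻¹) := by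
        filter_upwards [hne0] with y hy
        have hB := B y (R x)
        field_simp
        linarith [hB]
      exact (hg.congr_of_eventuallyEq heq).hasFDerivAt
    -- differentiated form of B
    have hE : ∀ u w : E,
        fderiv ℝ (fderiv ℝ η) x u (X x) w + fderiv ℝ η x (fderiv ℝ X x u) w
          - (fderiv ℝ (fderiv ℝ η) x u w (X x) + fderiv ℝ η x w (fderiv ℝ X x u))
        = fderiv ℝ (fderiv ℝ H) x u w
          - (fderiv ℝ H x (R x) * fderiv ℝ η x u w
            + η x w * fderiv ℝ (fun y => fderiv ℝ H y (R y)) x u) := by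
      intro u w
      have d1 := ((hη'd x).clm_apply (hXd x)).clm_apply (hasFDerivAt_const w x)
      have d2 := ((hη'd x).clm_apply (hasFDerivAt_const w x)).clm_apply (hXd x)
      have dL := d1.sub d2
      have r1 := (hH'd x).clm_apply (hasFDerivAt_const w x)
      have r2 := hFd.mul ((hηd x).clm_apply (hasFDerivAt_const w x))
      have dR := r1.sub r2
      have hfun : (fun y => fderiv ℝ η y (X y) w - fderiv ℝ η y w (X y))
          = fun y => fderiv ℝ H y w - fderiv ℝ H y (R y) * η y w := by
        funext y
        have hB := B y w
        simp only [dEta] at hB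
        linarith
      change HasFDerivAt (fun y => fderiv ℝ η y (X y) w - fderiv ℝ η y w (X y)) _ x at dL
      rw [hfun] at dL
      have happ := congrArg (fun T : E →L[ℝ] ℝ => T u) (dL.unique dR)
      simp only [ContinuousLinearMap.sub_apply, ContinuousLinearMap.add_apply,
        ContinuousLinearMap.smul_apply, ContinuousLinearMap.flip_apply,
        ContinuousLinearMap.coe_comp', Function.comp_apply, ContinuousLinearMap.zero_apply,
        map_zero, smul_eq_mul, zero_add, add_zero, mul_zero, zero_mul] at happ
      linear_combination happ
    -- Schwarz symmetry
    have csymm : ∀ a b : E, fderiv ℝ (fderiv ℝ η) x a b = fderiv ℝ (fderiv ℝ η) x b a :=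
      second_derivative_symmetric hηd (hη'd x)
    have cHsymm : ∀ a b : E, fderiv ℝ (fderiv ℝ H) x a b = fderiv ℝ (fderiv ℝ H) x b a :=
      second_derivative_symmetric hHd (hH'd x)
    -- hypotheses of the algebraic lemma
    have h1alg : ∀ u : E, fderiv ℝ η x (X x) u + η x (fderiv ℝ X x u)
        = -fderiv ℝ H x (R x) * η x u := by
      intro u
      have hB := B x u
      simp only [dEta] at hB
      linear_combination hA u + hB
    have h2alg : ∀ u w : E,
        (fderiv ℝ (fderiv ℝ η) x (X x) u w - fderiv ℝ (fderiv ℝ η) x (X x) w u)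
          + dEta η x (fderiv ℝ X x u) w + dEta η x u (fderiv ℝ X x w)
        = -fderiv ℝ H x (R x) * dEta η x u w
          - (fderiv ℝ (fun y => fderiv ℝ H y (R y)) x u * η x w
            - fderiv ℝ (fun y => fderiv ℝ H y (R y)) x w * η x u) := by
      intro u w
      have e1 := hE u w
      have e2 := hE w u
      have s1 := congrArg (fun T : E →L[ℝ] ℝ => T w) (csymm (X x) u)
      have s2 := congrArg (fun T : E →L[ℝ] ℝ => T u) (csymm (X x) w)
      have s3 := congrArg (fun T : E →L[ℝ] ℝ => T (X x)) (csymm u w)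
      have s4 := cHsymm u w
      simp only [dEta]
      linear_combination e1 - e2 + s1 - s2 + s3 + s4
    -- derivative of the contact volume
    have hDv := HasFDerivAt.fun_sum (u := (Finset.univ : Finset (Equiv.Perm (Fin (2 * n + 1)))))
      (fun σ _ => ((hηappHas x (v (σ 0))).mul
        (HasFDerivAt.finset_prod (u := (Finset.univ : Finset (Fin n)))
          (fun i _ => hdEtaHas x (v (σ (oI n i))) (v (σ (eI n i)))))).const_mul
        ((Equiv.Perm.sign σ : ℤ) : ℝ))
    have hDc : HasFDerivAt (fun y => contactVol η n y v) _ x := hDv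
    have hD1 : fderiv ℝ (fun y => contactVol η n y v) x (X x)
        = ∑ σ : Equiv.Perm (Fin (2 * n + 1)), ((Equiv.Perm.sign σ : ℤ) : ℝ) *
            (η x (v (σ 0)) * ∑ j : Fin n,
                (fderiv ℝ (fderiv ℝ η) x (X x) (v (σ (oI n j))) (v (σ (eI n j)))
                  - fderiv ℝ (fderiv ℝ η) x (X x) (v (σ (eI n j))) (v (σ (oI n j)))) *
                ∏ i ∈ Finset.univ.erase j, dEta η x (v (σ (oI n i))) (v (σ (eI n i)))
              + (∏ i : Fin n, dEta η x (v (σ (oI n i))) (v (σ (eI n i))))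
                  * fderiv ℝ η x (X x) (v (σ 0))) := by
      rw [hDc.fderiv, ContinuousLinearMap.sum_apply]
      refine Finset.sum_congr rfl fun σ _ => ?_
      simp only [ContinuousLinearMap.smul_apply, smul_eq_mul, ContinuousLinearMap.add_apply,
        ContinuousLinearMap.sum_apply, ContinuousLinearMap.sub_apply,
        ContinuousLinearMap.flip_apply]
      rw [Finset.sum_congr rfl fun j (_ : j ∈ (Finset.univ : Finset (Fin n))) =>
        mul_comm (∏ i ∈ Finset.univ.erase j, dEta η x (v (σ (oI n i))) (v (σ (eI n i))))
          (fderiv ℝ (fderiv ℝ η) x (X x) (v (σ (oI n j))) (v (σ (eI n j)))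
            - fderiv ℝ (fderiv ℝ η) x (X x) (v (σ (eI n j))) (v (σ (oI n j))))]
    have halg := alg (n := n) (fun u => η x u)
      (fun u => fderiv ℝ η x (X x) u)
      (fun u => fderiv ℝ (fun y => fderiv ℝ H y (R y)) x u)
      (fun u w => dEta η x u w)
      (fun u w => fderiv ℝ (fderiv ℝ η) x (X x) u w - fderiv ℝ (fderiv ℝ η) x (X x) w u)
      (fun u => fderiv ℝ X x u)
      (fderiv ℝ H x (R x)) h1alg h2alg v
    simp only [Function.comp_apply] at halg
    have hupd : ∑ i : Fin (2 * n + 1),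
          contactVol η n x (Function.update v i (fderiv ℝ X x (v i)))
        = ∑ σ : Equiv.Perm (Fin (2 * n + 1)), ((Equiv.Perm.sign σ : ℤ) : ℝ) *
            ∑ p, P (fun u => η x u) (fun u w => dEta η x u w)
              (Function.update (v ∘ ⇑σ) p (fderiv ℝ X x (v (σ p)))) := by
      have step1 : ∑ i : Fin (2 * n + 1),
            contactVol η n x (Function.update v i (fderiv ℝ X x (v i)))
          = ∑ i : Fin (2 * n + 1), ∑ σ : Equiv.Perm (Fin (2 * n + 1)),
              ((Equiv.Perm.sign σ : ℤ) : ℝ) * P (fun u => η x u) (fun u w => dEta η x u w)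
                (Function.update v i (fderiv ℝ X x (v i)) ∘ ⇑σ) :=
        Finset.sum_congr rfl fun i _ => rfl
      rw [step1, Finset.sum_comm]
      refine Finset.sum_congr rfl fun σ _ => ?_
      rw [← Finset.mul_sum]
      congr 1
      rw [← Equiv.sum_comp σ (fun k => P (fun u => η x u) (fun u w => dEta η x u w)
        (Function.update v k (fderiv ℝ X x (v k)) ∘ ⇑σ))]
      exact Finset.sum_congr rfl fun p _ => by
        rw [Function.update_comp_eq_of_injective v σ.injective]
    rw [hD1, hupd]
    exact halg
  refine ⟨part1, ?_⟩
  intro hne x v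
  have hΩd : DifferentiableAt ℝ (fun y => contactVol η n y v) x := by
    have hDv := HasFDerivAt.fun_sum (u := (Finset.univ : Finset (Equiv.Perm (Fin (2 * n + 1)))))
      (fun σ _ => ((hηappHas x (v (σ 0))).mul
        (HasFDerivAt.finset_prod (u := (Finset.univ : Finset (Fin n)))
          (fun i _ => hdEtaHas x (v (σ (oI n i))) (v (σ (eI n i)))))).const_mul
        ((Equiv.Perm.sign σ : ℤ) : ℝ))
    have hDc : HasFDerivAt (fun y => contactVol η n y v) _ x := hDv
    exact hDc.differentiableAt
  have hXHx : fderiv ℝ H x (X x) = -fderiv ℝ H x (R x) * H x := by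
    have hB := B x (X x)
    have h0 : dEta η x (X x) (X x) = 0 := by simp [dEta]
    rw [h0, ηX x] at hB
    linarith
  have hgd : HasFDerivAt (fun y => (H y ^ (n + 1))⁻¹)
      ((-(((n + 1 : ℕ) : ℝ) * H x ^ (n + 1 - 1)) / (H x ^ (n + 1)) ^ 2) • fderiv ℝ H x) x :=
    ((hasDerivAt_pow (n + 1) (H x)).inv (pow_ne_zero _ (hne x))).comp_hasFDerivAt x (hHd x)
  have hp1 := part1 x v
  rw [fderiv_fun_mul hgd.differentiableAt hΩd]
  rw [hgd.fderiv]
  simp only [ContinuousLinearMap.add_apply, ContinuousLinearMap.smul_apply, smul_eq_mul,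
    ContinuousLinearMap.neg_apply]
  rw [← Finset.mul_sum]
  rw [show fderiv ℝ (fun y => contactVol η n y v) x (X x)
      = -((n : ℝ) + 1) * fderiv ℝ H x (R x) * contactVol η n x v
        - ∑ i : Fin (2 * n + 1),
            contactVol η n x (Function.update v i (fderiv ℝ X x (v i))) from by linarith]
  rw [hXHx]
  have hHx := hne x
  have hpow : H x ^ (n + 1) ≠ 0 := pow_ne_zero _ hHx
  simp only [Nat.add_sub_cancel]
  push_cast
  field_simp
  ring
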